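/- Let a : ℕ → ℤ be a sequence of n integers and define dp : ℕ → ℤ by dp(0) = 0, dp(1) = max(a(1), 0), and dp(i+1) = max(dp(i-1) + a(i+1), dp(i)) for i ≥ 1. Then dp(n) equals the maximum of Σ_{j ∈ S} a(j) over all subsets S ⊆ {1,…,n} containing no two consecutive indices (where the empty subset contributes 0). -/
import Mathlib


theorem stmt_4 (n : ℕ) (a : ℕ → ℤ) (dp : ℕ → ℤ)
    (hdp0 : dp 0 = 0) (hdp1 : dp 1 = max (a 1) 0)
    (hstep : ∀ i ≥ 1, dp (i + 1) = max (dp (i - 1) + a (i + 1)) (dp i)) :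
    IsGreatest {x : ℤ | ∃ S : Finset ℕ, S ⊆ Finset.Icc 1 n ∧
      (∀ i ∈ S, i + 1 ∉ S) ∧ x = ∑ j ∈ S, a j} (dp n) := by
  induction n using Nat.strong_induction_on with
  | _ n IH =>
    match n with
    | 0 =>
      constructor
      · exact ⟨∅, by simp, by simp, by simp [hdp0]⟩
      · rintro x ⟨S, hS, -, rfl⟩
        have : S = ∅ := Finset.subset_empty.mp (by simpa using hS)
        simp [this, hdp0]
    | 1 =>
      constructor
      · rcases le_total (a 1) 0 with h | h
        · exact ⟨∅, by simp, by simp, by simp [hdp1, max_eq_right h]⟩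
        · refine ⟨{1}, by simp, by simp, ?_⟩
          simp [hdp1, max_eq_left h]
      · rintro x ⟨S, hS, -, rfl⟩
        rw [show Finset.Icc 1 1 = {1} by rfl] at hS
        rcases Finset.subset_singleton_iff.mp hS with rfl | rfl
        · simp [hdp1]
        · simp [hdp1]
    | m + 2 =>
      have h1 := IH m (by omega)
      have h2 := IH (m + 1) (by omega)
      have hst := hstep (m + 1) (by omega)
      simp only [Nat.add_sub_cancel] at hst
      constructor
      · rcases le_total (dp m + a (m + 2)) (dp (m + 1)) with h | h
        · obtain ⟨S₂, hS₂, hc₂, hx₂⟩ := h2.1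
          refine ⟨S₂, ?_, hc₂, ?_⟩
          · exact hS₂.trans (Finset.Icc_subset_Icc_right (by omega))
          · rw [hst, max_eq_right h, hx₂]
        · obtain ⟨S₁, hS₁, hc₁, hx₁⟩ := h1.1
          have hmem : ∀ j ∈ S₁, 1 ≤ j ∧ j ≤ m := by
            intro j hj; exact Finset.mem_Icc.mp (hS₁ hj)
          have hnot : (m + 2) ∉ S₁ := fun hc => by have := hmem _ hc; omega
          refine ⟨insert (m + 2) S₁, ?_, ?_, ?_⟩
          · intro j hj
            rcases Finset.mem_insert.mp hj with rfl | hj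
            · exact Finset.mem_Icc.mpr (by omega)
            · have := hmem _ hj; exact Finset.mem_Icc.mpr (by omega)
          · intro i hi
            rcases Finset.mem_insert.mp hi with rfl | hi
            · intro hc
              rcases Finset.mem_insert.mp hc with h' | h'
              · omega
              · have := hmem _ h'; omega
            · intro hc
              rcases Finset.mem_insert.mp hc with h' | h'
              · have := hmem _ hi; omega
              · exact hc₁ _ hi h'
          · rw [Finset.sum_insert hnot, hst, max_eq_left h, hx₁]
            ring
      · rintro x ⟨S, hS, hc, rfl⟩
        have hmem : ∀ j ∈ S, 1 ≤ j ∧ j ≤ m + 2 := by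
          intro j hj; exact Finset.mem_Icc.mp (hS hj)
        by_cases h : m + 2 ∈ S
        · have hsub : S.erase (m + 2) ⊆ Finset.Icc 1 m := by
            intro j hj
            obtain ⟨hne, hjS⟩ := Finset.mem_erase.mp hj
            have := hmem _ hjS
            have hj1 : j ≠ m + 1 := by
              rintro rfl
              exact hc _ hjS h
            simp [Finset.mem_Icc]; omega
          have hle : ∑ j ∈ S.erase (m + 2), a j ≤ dp m :=
            h1.2 ⟨S.erase (m + 2), hsub,
              fun i hi => fun hc' => hc _ (Finset.mem_erase.mp hi).2 (Finset.mem_erase.mp hc').2,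
              rfl⟩
          have hsum : ∑ j ∈ S, a j = (∑ j ∈ S.erase (m + 2), a j) + a (m + 2) :=
            (Finset.sum_erase_add S a h).symm
          rw [hsum, hst]
          exact le_max_of_le_left (by linarith)
        · have hsub : S ⊆ Finset.Icc 1 (m + 1) := by
            intro j hj
            have := hmem _ hj
            have : j ≠ m + 2 := by rintro rfl; exact h hj
            simp [Finset.mem_Icc]; omega
          have hle : ∑ j ∈ S, a j ≤ dp (m + 1) := h2.2 ⟨S, hsub, hc, rfl⟩
          rw [hst]
          exact le_max_of_le_right hle
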